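/- arXiv:1707.07463 — 5 statements merged into one kernel-verified Lean document; each statement's English description precedes it below -/
import Mathlib

section
/- Let q ∈ (1,2) and t₀ ∈ ℝ. The function u : ℝ → ℝ defined by u(t) = (2q/(2-q)²)^(1/(q-2)) · (t-t₀)^(2/(2-q)) for t > t₀ and u(t) = 0 for t ≤ t₀ is twice continuously differentiable and satisfies u''(t) = |u(t)|^(q-2) u(t) for all t ∈ ℝ, yet u vanishes on the open set (-∞, t₀) without being identically zero. -/
open Real

/-!
With `p = 2/(2-q) > 2`, the profile `c * max (t - t₀) 0 ^ p` is `C²` because its second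
derivative `c p (p-1) max (t - t₀) 0 ^ (p-2)` is continuous and vanishes at `t₀`. Since
`p - 2 = p (q - 2) + p`, the ODE reduces on `t > t₀` to `c ^ (q-2) = p (p-1) = 2q/(2-q)²`,
which is how `c` is chosen.
-/

lemma hasDerivAt_max_zero_rpow {p : ℝ} (hp : 1 < p) (x : ℝ) :
    HasDerivAt (fun y : ℝ => max y 0 ^ p) (p * max x 0 ^ (p - 1)) x := by
  have hp0 : p ≠ 0 := by positivity
  have hp1 : p - 1 ≠ 0 := sub_ne_zero.mpr hp.ne'
  rcases lt_trichotomy x 0 with hx | rfl | hx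
  · rw [max_eq_right hx.le, zero_rpow hp1, mul_zero]
    refine (hasDerivAt_const x (0 : ℝ)).congr_of_eventuallyEq ?_
    filter_upwards [Iio_mem_nhds hx] with y hy
    rw [max_eq_right (le_of_lt hy), zero_rpow hp0]
  · rw [max_self, zero_rpow hp1, mul_zero, ← hasDerivWithinAt_univ, ← Set.Iic_union_Ici]
    refine .union ?_ ?_
    · refine (hasDerivWithinAt_const 0 _ (0 : ℝ)).congr_of_mem (fun y hy => ?_) Set.self_mem_Iic
      rw [max_eq_right hy, zero_rpow hp0]
    · have h := (hasDerivAt_rpow_const (x := 0) (Or.inr hp.le)).hasDerivWithinAt (s := Set.Ici 0)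
      rw [zero_rpow hp1, mul_zero] at h
      exact h.congr_of_mem (fun y hy => by rw [max_eq_left hy]) Set.self_mem_Ici
  · rw [max_eq_left hx.le]
    refine (hasDerivAt_rpow_const (Or.inl hx.ne')).congr_of_eventuallyEq ?_
    filter_upwards [Ioi_mem_nhds hx] with y hy
    rw [max_eq_left (le_of_lt hy)]

section Profile

variable {c p : ℝ} (t₀ : ℝ)

lemma hasDerivAt_const_mul_max_sub_rpow (hp : 1 < p) (t : ℝ) :
    HasDerivAt (fun t : ℝ => c * max (t - t₀) 0 ^ p)
      (c * p * max (t - t₀) 0 ^ (p - 1)) t := by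
  have h := (hasDerivAt_max_zero_rpow hp (t - t₀)).comp t ((hasDerivAt_id t).sub_const t₀)
  simpa [mul_assoc] using h.const_mul c

lemma deriv_const_mul_max_sub_rpow (hp : 1 < p) :
    deriv (fun t : ℝ => c * max (t - t₀) 0 ^ p) = fun t => c * p * max (t - t₀) 0 ^ (p - 1) :=
  funext fun t => (hasDerivAt_const_mul_max_sub_rpow t₀ hp t).deriv

lemma differentiable_const_mul_max_sub_rpow (hp : 1 < p) :
    Differentiable ℝ (fun t : ℝ => c * max (t - t₀) 0 ^ p) := fun t =>
  (hasDerivAt_const_mul_max_sub_rpow t₀ hp t).differentiableAt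

lemma deriv_deriv_const_mul_max_sub_rpow (hp : 2 < p) :
    deriv (deriv fun t : ℝ => c * max (t - t₀) 0 ^ p) =
      fun t => c * p * (p - 1) * max (t - t₀) 0 ^ (p - 2) := by
  rw [deriv_const_mul_max_sub_rpow t₀ (by linarith),
    deriv_const_mul_max_sub_rpow t₀ (by linarith), sub_sub, one_add_one_eq_two]

lemma contDiff_two_const_mul_max_sub_rpow (hp : 2 < p) :
    ContDiff ℝ 2 (fun t : ℝ => c * max (t - t₀) 0 ^ p) := by
  rw [show (2 : WithTop ℕ∞) = 1 + 1 from rfl, contDiff_succ_iff_deriv, contDiff_one_iff_deriv,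
    deriv_deriv_const_mul_max_sub_rpow t₀ hp, deriv_const_mul_max_sub_rpow t₀ (by linarith)]
  refine ⟨differentiable_const_mul_max_sub_rpow t₀ (by linarith), by simp,
    differentiable_const_mul_max_sub_rpow t₀ (by linarith), ?_⟩
  exact continuous_const.mul
    (((continuous_id.sub continuous_const).max continuous_const).rpow_const
      fun _ => Or.inr (by linarith))

lemma ite_le_sub_rpow_eq_mul_max_sub_rpow (hp : p ≠ 0) (t : ℝ) :
    (if t ≤ t₀ then 0 else c * (t - t₀) ^ p) = c * max (t - t₀) 0 ^ p := by
  split_ifs with ht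
  · rw [max_eq_right (sub_nonpos.mpr ht), zero_rpow hp, mul_zero]
  · rw [max_eq_left (by linarith)]

lemma const_mul_max_sub_rpow_ode {q : ℝ} (hc : 0 < c) (hp : 2 < p)
    (hcq : c ^ (q - 2) = p * (p - 1)) (hpq : p - 2 = p * (q - 2) + p) (t : ℝ) :
    deriv (deriv fun t : ℝ => c * max (t - t₀) 0 ^ p) t =
      if c * max (t - t₀) 0 ^ p = 0 then 0
      else |c * max (t - t₀) 0 ^ p| ^ (q - 2) * (c * max (t - t₀) 0 ^ p) := by
  simp only [deriv_deriv_const_mul_max_sub_rpow t₀ hp]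
  rcases (le_max_right (t - t₀) 0).eq_or_lt with h0 | hx
  · simp [← h0, zero_rpow (by linarith : p - 2 ≠ 0), zero_rpow (by linarith : p ≠ 0)]
  · have hxp : 0 < max (t - t₀) 0 ^ p := rpow_pos_of_pos hx p
    rw [if_neg (mul_pos hc hxp).ne', abs_of_pos (mul_pos hc hxp), mul_rpow hc.le hxp.le,
      ← rpow_mul hx.le, hcq, hpq, rpow_add hx]
    ring

end Profile

theorem stmt0 (q t₀ : ℝ) (hq1 : 1 < q) (hq2 : q < 2)
    (u : ℝ → ℝ)
    (hu : ∀ t : ℝ, u t = if t ≤ t₀ then 0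
      else (2 * q / (2 - q) ^ 2) ^ (1 / (q - 2)) * (t - t₀) ^ (2 / (2 - q))) :
    ContDiff ℝ 2 u ∧
    (∀ t : ℝ, deriv (deriv u) t = if u t = 0 then 0 else |u t| ^ (q - 2) * u t) ∧
    (∀ t < t₀, u t = 0) ∧ ¬ (∀ t : ℝ, u t = 0) := by
  have h2q : 0 < 2 - q := by linarith
  set p := 2 / (2 - q) with hp_def
  set K := 2 * q / (2 - q) ^ 2 with hK_def
  set c := K ^ (1 / (q - 2)) with hc_def
  have hp : 2 < p := by rw [hp_def, lt_div_iff₀ h2q]; linarith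
  have hK : 0 < K := by positivity
  have hc : 0 < c := rpow_pos_of_pos hK _
  have hcq : c ^ (q - 2) = p * (p - 1) := by
    rw [hc_def, one_div, rpow_inv_rpow hK.le (by linarith), hK_def, hp_def]
    field_simp
    ring
  have hpq : p - 2 = p * (q - 2) + p := by rw [hp_def]; field_simp; ring
  have hu_eq : u = fun t => c * max (t - t₀) 0 ^ p :=
    funext fun t => (hu t).trans (ite_le_sub_rpow_eq_mul_max_sub_rpow t₀ (by positivity) t)
  subst hu_eq
  refine ⟨contDiff_two_const_mul_max_sub_rpow t₀ hp,
    const_mul_max_sub_rpow_ode t₀ hc hp hcq hpq, fun t ht => ?_, fun h => ?_⟩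
  · simp [max_eq_right (sub_nonpos.mpr ht.le), zero_rpow (by linarith : p ≠ 0)]
  · simpa [hc.ne'] using h (t₀ + 1)
end

section
/- Let q ∈ (1,2) and let u : ℝ → ℝ be a C² solution of -u'' = |u|^(q-2)u on ℝ which is not identically zero. If u(t₀) = 0 at some point t₀, then u'(t₀) ≠ 0; consequently all zeros of u are isolated and u cannot vanish on any open interval. -/
/-! The energy `E = (u')² / 2 + |u|^q / q` is conserved along solutions, and it is a sum of two
nonnegative terms. At a zero `t₀` with `u'(t₀) = 0` it vanishes, hence it vanishes identically and so
does `u`. A zero with nonzero slope is isolated, and `u` cannot vanish on an open interval, since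
there `u' = 0` as well. -/

open Real Filter Topology

noncomputable def energy (q : ℝ) (u : ℝ → ℝ) (t : ℝ) : ℝ :=
  deriv u t ^ 2 / 2 + |u t| ^ q / q

section Energy

variable {q : ℝ} {u : ℝ → ℝ}

theorem hasDerivAt_energy (hq : 1 < q) (hu : Differentiable ℝ u)
    (hu' : Differentiable ℝ (deriv u)) (t : ℝ) :
    HasDerivAt (energy q u) (deriv u t * (deriv (deriv u) t + |u t| ^ (q - 2) * u t)) t := by
  have hkin := ((hu' t).hasDerivAt.pow 2).div_const 2
  have hpot := ((hasDerivAt_abs_rpow (u t) hq).comp t (hu t).hasDerivAt).div_const q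
  refine (hkin.add hpot).congr_deriv ?_
  field_simp
  ring

theorem energy_eq_of_deriv_deriv (hq : 1 < q) (hu : Differentiable ℝ u)
    (hu' : Differentiable ℝ (deriv u))
    (hode : ∀ t, deriv (deriv u) t = -(|u t| ^ (q - 2) * u t)) (s t : ℝ) :
    energy q u s = energy q u t := by
  refine is_const_of_deriv_eq_zero (fun x => (hasDerivAt_energy hq hu hu' x).differentiableAt)
    (fun x => ?_) s t
  simp [(hasDerivAt_energy hq hu hu' x).deriv, hode x]

theorem eq_zero_of_energy_eq_zero (hq : 0 < q) {t : ℝ} (h : energy q u t = 0) : u t = 0 := by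
  have hkin : 0 ≤ deriv u t ^ 2 / 2 := by positivity
  have hpot : 0 ≤ |u t| ^ q / q := by positivity
  have : |u t| ^ q = 0 := by
    unfold energy at h
    exact (div_eq_zero_iff.mp (by linarith)).resolve_right hq.ne'
  simpa [rpow_eq_zero (abs_nonneg _) hq.ne'] using this

theorem deriv_ne_zero_of_eq_zero (hq : 1 < q) (hu : Differentiable ℝ u)
    (hu' : Differentiable ℝ (deriv u))
    (hode : ∀ t, deriv (deriv u) t = -(|u t| ^ (q - 2) * u t)) (hne : ∃ t, u t ≠ 0)
    {s : ℝ} (hs : u s = 0) : deriv u s ≠ 0 := by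
  intro hds
  obtain ⟨t, ht⟩ := hne
  have hEs : energy q u s = 0 := by simp [energy, hs, hds, zero_rpow (by linarith : q ≠ 0)]
  exact ht (eq_zero_of_energy_eq_zero (by linarith)
    ((energy_eq_of_deriv_deriv hq hu hu' hode t s).trans hEs))

end Energy

theorem exists_Ioo_ne_zero_of_hasDerivAt {f : ℝ → ℝ} {f' x : ℝ} (hf : HasDerivAt f f' x)
    (hf' : f' ≠ 0) : ∃ ε > 0, ∀ t ∈ Set.Ioo (x - ε) (x + ε), t ≠ x → f t ≠ 0 := by
  obtain ⟨ε, hε, hball⟩ := Metric.eventually_nhds_iff_ball.mp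
    (eventually_nhdsWithin_iff.mp (hf.eventually_ne (c := 0) hf'))
  exact ⟨ε, hε, fun t ht => hball t (by rwa [Real.ball_eq_Ioo])⟩

theorem deriv_eq_zero_of_eqOn_Ioo {f : ℝ → ℝ} {a b x : ℝ} (hf : Set.EqOn f 0 (Set.Ioo a b))
    (hx : x ∈ Set.Ioo a b) : deriv f x = 0 := by
  have hloc : f =ᶠ[𝓝 x] fun _ => 0 := eventually_of_mem (isOpen_Ioo.mem_nhds hx) hf
  simp [hloc.deriv_eq]

theorem stmt2_general (q : ℝ) (hq1 : 1 < q) (u : ℝ → ℝ)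
    (hu : ContDiff ℝ 2 u)
    (heq : ∀ t : ℝ, -(deriv (deriv u) t) = if u t = 0 then 0 else |u t| ^ (q - 2) * u t)
    (hnontriv : ¬ (∀ t : ℝ, u t = 0))
    (t₀ : ℝ) (ht₀ : u t₀ = 0) :
    deriv u t₀ ≠ 0 ∧
    (∃ ε > 0, ∀ t ∈ Set.Ioo (t₀ - ε) (t₀ + ε), t ≠ t₀ → u t ≠ 0) ∧
    (∀ a b : ℝ, a < b → ¬ (∀ t ∈ Set.Ioo a b, u t = 0)) := by
  have hu₁ : Differentiable ℝ u := hu.differentiable (by norm_num)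
  have hu₂ : Differentiable ℝ (deriv u) :=
    (contDiff_succ_iff_deriv (n := 1).mp hu).2.2.differentiable one_ne_zero
  -- the case split in `heq` is immaterial, as `|0| ^ (q - 2) * 0 = 0`
  have hode : ∀ t, deriv (deriv u) t = -(|u t| ^ (q - 2) * u t) := fun t => by
    rw [← neg_neg (deriv (deriv u) t), heq t]
    split_ifs with h <;> simp [h]
  have key : ∀ {s}, u s = 0 → deriv u s ≠ 0 :=
    deriv_ne_zero_of_eq_zero hq1 hu₁ hu₂ hode (by simpa using hnontriv)
  refine ⟨key ht₀, exists_Ioo_ne_zero_of_hasDerivAt (hu₁ t₀).hasDerivAt (key ht₀), ?_⟩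
  intro a b hab hzero
  have hm : (a + b) / 2 ∈ Set.Ioo a b := ⟨by linarith, by linarith⟩
  exact key (hzero _ hm) (deriv_eq_zero_of_eqOn_Ioo hzero hm)

theorem stmt2 (q : ℝ) (hq1 : 1 < q) (hq2 : q < 2) (u : ℝ → ℝ)
    (hu : ContDiff ℝ 2 u)
    (heq : ∀ t : ℝ, -(deriv (deriv u) t) = if u t = 0 then 0 else |u t| ^ (q - 2) * u t)
    (hnontriv : ¬ (∀ t : ℝ, u t = 0))
    (t₀ : ℝ) (ht₀ : u t₀ = 0) :
    deriv u t₀ ≠ 0 ∧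
    (∃ ε > 0, ∀ t ∈ Set.Ioo (t₀ - ε) (t₀ + ε), t ≠ t₀ → u t ≠ 0) ∧
    (∀ a b : ℝ, a < b → ¬ (∀ t ∈ Set.Ioo a b, u t = 0)) :=
  stmt2_general q hq1 u hu heq hnontriv t₀ ht₀
end

section
/- Let F : Ω × ℝ → ℝ with F(x,s) = ∫₀^s f(x,t) dt, and suppose there exist ε₀ > 0 and q < 2 such that 0 < f(x,s)s ≤ q F(x,s) for a.e. s ∈ (-ε₀,ε₀)\{0} and all x ∈ Ω. Then for each fixed x ∈ Ω, the function s ↦ F(x,s)/|s|^q is nonincreasing on (0, ε₀) and nondecreasing on (-ε₀, 0). -/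
/-!
Away from `0`, `G s = F s * |s| ^ (-q)` is absolutely continuous, being the product of the
primitive of a locally integrable function and a `C¹` function. By Lebesgue's differentiation
theorem `F' = f` a.e., so a.e. `G' s = |s| ^ (-q) / s * (f s * s - q * F s)`, and the hypothesis
makes the bracket nonpositive: `G' ≤ 0` on `(0, ε₀)` and `G' ≥ 0` on `(-ε₀, 0)`. The fundamental
theorem of calculus for absolutely continuous functions turns these sign conditions into
monotonicity.
-/

open Real MeasureTheory Set

theorem hasDerivAt_abs_rpow_const {x : ℝ} (hx : x ≠ 0) (p : ℝ) :
    HasDerivAt (fun t : ℝ => |t| ^ p) (p * |x| ^ p / x) x := by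
  convert (hasDerivAt_abs hx).rpow_const (p := p) (Or.inl (abs_ne_zero.2 hx)) using 1
  rw [rpow_sub_one (abs_ne_zero.2 hx)]
  rcases hx.lt_or_gt with hx | hx
  · simp only [abs_of_neg hx, sign_neg hx, SignType.coe_neg, SignType.coe_one]
    field_simp
  · simp only [abs_of_pos hx, sign_pos hx, SignType.coe_one]
    field_simp

theorem absolutelyContinuousOnInterval_abs_rpow {a b : ℝ} (h0 : (0 : ℝ) ∉ uIcc a b) (p : ℝ) :
    AbsolutelyContinuousOnInterval (fun t : ℝ => |t| ^ p) a b :=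
  ContDiffOn.absolutelyContinuousOnInterval fun x hx =>
    have hx0 : x ≠ 0 := ne_of_mem_of_not_mem hx h0
    ((contDiffAt_rpow_const_of_ne (abs_ne_zero.2 hx0)).comp x
      (contDiffAt_abs hx0)).contDiffWithinAt

theorem AbsolutelyContinuousOnInterval.le_of_ae_deriv_nonneg {g : ℝ → ℝ} {a b : ℝ}
    (hab : a ≤ b) (hg : AbsolutelyContinuousOnInterval g a b)
    (hd : ∀ᵐ x, x ∈ Icc a b → 0 ≤ deriv g x) : g a ≤ g b := by
  rw [← sub_nonneg, ← hg.integral_deriv_eq_sub]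
  exact intervalIntegral.integral_nonneg_of_ae_restrict hab <|
    (ae_restrict_iff' measurableSet_Icc).2 hd

theorem monotoneOn_of_ae_deriv_nonneg {g : ℝ → ℝ} {s : Set ℝ} (hs : s.OrdConnected)
    (hg : ∀ a ∈ s, ∀ b ∈ s, AbsolutelyContinuousOnInterval g a b)
    (hd : ∀ᵐ x, x ∈ s → 0 ≤ deriv g x) : MonotoneOn g s := by
  intro a ha b hb hab
  refine (hg a ha b hb).le_of_ae_deriv_nonneg hab ?_
  filter_upwards [hd] with x hx hxab
  exact hx (hs.out ha hb hxab)

theorem antitoneOn_of_ae_deriv_nonpos {g : ℝ → ℝ} {s : Set ℝ} (hs : s.OrdConnected)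
    (hg : ∀ a ∈ s, ∀ b ∈ s, AbsolutelyContinuousOnInterval g a b)
    (hd : ∀ᵐ x, x ∈ s → deriv g x ≤ 0) : AntitoneOn g s := by
  have := monotoneOn_of_ae_deriv_nonneg (g := -g) hs (fun a ha b hb => (hg a ha b hb).neg) <| by
    filter_upwards [hd] with x hx hxs
    simpa only [deriv.neg', neg_nonneg] using hx hxs
  exact fun a ha b hb hab => neg_le_neg_iff.1 (this ha hb hab)

section Primitive

variable {f : ℝ → ℝ}

theorem locallyIntegrable_of_forall_intervalIntegrable
    (hf : ∀ a b, IntervalIntegrable f volume a b) : LocallyIntegrable f volume := fun x =>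
  ⟨Icc (x - 1) (x + 1), Icc_mem_nhds (by linarith) (by linarith),
    (intervalIntegrable_iff_integrableOn_Icc_of_le (by linarith)).1 (hf _ _)⟩

theorem absolutelyContinuousOnInterval_primitive
    (hf : ∀ a b, IntervalIntegrable f volume a b) (c a b : ℝ) :
    AbsolutelyContinuousOnInterval (fun x => ∫ t in c..x, f t) a b := by
  have mem : ∀ x ∈ ({a, b, c} : Set ℝ), x ∈ uIcc (min (min a b) c) (max (max a b) c) := by
    rintro x (rfl | rfl | rfl) <;> exact mem_uIcc.2 (Or.inl ⟨by simp, by simp⟩)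
  exact ((hf _ _).absolutelyContinuousOnInterval_intervalIntegral (mem c (by simp))).mono
    (uIcc_subset_uIcc (mem a (by simp)) (mem b (by simp)))

theorem ae_hasDerivAt_primitive_mul_abs_rpow_neg
    (hf : ∀ a b, IntervalIntegrable f volume a b) (q : ℝ) :
    ∀ᵐ s, s ≠ 0 → HasDerivAt (fun t => (∫ u in 0..t, f u) * |t| ^ (-q))
      (|s| ^ (-q) / s * (f s * s - q * ∫ u in 0..s, f u)) s := by
  filter_upwards [LocallyIntegrable.ae_hasDerivAt_integral
    (locallyIntegrable_of_forall_intervalIntegrable hf)] with s hF hs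
  refine ((hF 0).mul (hasDerivAt_abs_rpow_const hs (-q))).congr_deriv ?_
  field_simp
  ring

theorem absolutelyContinuousOnInterval_primitive_mul_abs_rpow
    (hf : ∀ a b, IntervalIntegrable f volume a b) {s : Set ℝ} (hs : s.OrdConnected)
    (hs0 : (0 : ℝ) ∉ s) (p : ℝ) :
    ∀ a ∈ s, ∀ b ∈ s,
      AbsolutelyContinuousOnInterval (fun t => (∫ u in 0..t, f u) * |t| ^ p) a b :=
  fun a ha b hb => (absolutelyContinuousOnInterval_primitive hf 0 a b).fun_mul
    (absolutelyContinuousOnInterval_abs_rpow (fun h => hs0 (hs.uIcc_subset ha hb h)) p)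

theorem antitoneOn_primitive_div_abs_rpow
    (hf : ∀ a b, IntervalIntegrable f volume a b) {q : ℝ} {s : Set ℝ} (hs : s.OrdConnected)
    (hs0 : s ⊆ Ioi 0) (hsub : ∀ᵐ t, t ∈ s → f t * t ≤ q * ∫ u in 0..t, f u) :
    AntitoneOn (fun t => (∫ u in 0..t, f u) / |t| ^ q) s := by
  simp_rw [div_eq_mul_inv, ← rpow_neg (abs_nonneg _)]
  refine antitoneOn_of_ae_deriv_nonpos hs
    (absolutelyContinuousOnInterval_primitive_mul_abs_rpow hf hs
    (notMem_subset hs0 self_notMem_Ioi) _) ?_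
  filter_upwards [ae_hasDerivAt_primitive_mul_abs_rpow_neg hf q, hsub] with t hderiv hle ht
  have ht0 : 0 < t := hs0 ht
  rw [(hderiv ht0.ne').deriv]
  exact mul_nonpos_of_nonneg_of_nonpos (by positivity) (sub_nonpos.2 (hle ht))

theorem monotoneOn_primitive_div_abs_rpow
    (hf : ∀ a b, IntervalIntegrable f volume a b) {q : ℝ} {s : Set ℝ} (hs : s.OrdConnected)
    (hs0 : s ⊆ Iio 0) (hsub : ∀ᵐ t, t ∈ s → f t * t ≤ q * ∫ u in 0..t, f u) :
    MonotoneOn (fun t => (∫ u in 0..t, f u) / |t| ^ q) s := by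
  simp_rw [div_eq_mul_inv, ← rpow_neg (abs_nonneg _)]
  refine monotoneOn_of_ae_deriv_nonneg hs
    (absolutelyContinuousOnInterval_primitive_mul_abs_rpow hf hs
    (notMem_subset hs0 self_notMem_Iio) _) ?_
  filter_upwards [ae_hasDerivAt_primitive_mul_abs_rpow_neg hf q, hsub] with t hderiv hle ht
  have ht0 : t < 0 := hs0 ht
  rw [(hderiv ht0.ne).deriv]
  exact mul_nonneg_of_nonpos_of_nonpos (div_nonpos_of_nonneg_of_nonpos (by positivity) ht0.le)
    (sub_nonpos.2 (hle ht))

end Primitive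

theorem stmt11_general {X : Type*} (f F : X → ℝ → ℝ)
    (hfi : ∀ x : X, ∀ a b : ℝ, IntervalIntegrable (f x) volume a b)
    (hF : ∀ (x : X) (s : ℝ), F x s = ∫ t in (0 : ℝ)..s, f x t)
    (ε₀ q : ℝ)
    (hsub : ∀ x : X, ∀ᵐ s ∂(volume.restrict (Set.Ioo (-ε₀) ε₀)),
      s ≠ 0 → 0 < f x s * s ∧ f x s * s ≤ q * F x s) :
    ∀ x : X,
      AntitoneOn (fun s => F x s / |s| ^ q) (Set.Ioo 0 ε₀) ∧
      MonotoneOn (fun s => F x s / |s| ^ q) (Set.Ioo (-ε₀) 0) := by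
  intro x
  have hFx : F x = fun s => ∫ t in (0 : ℝ)..s, f x t := funext (hF x)
  have hle : ∀ᵐ s, s ∈ Ioo (-ε₀) ε₀ → s ≠ 0 → f x s * s ≤ q * ∫ t in (0 : ℝ)..s, f x t := by
    filter_upwards [(ae_restrict_iff' measurableSet_Ioo).1 (hsub x)] with s hs hmem hs0
    simpa only [hF x] using (hs hmem hs0).2
  rw [hFx]
  constructor
  · refine antitoneOn_primitive_div_abs_rpow (hfi x) ordConnected_Ioo (fun s hs => hs.1) ?_
    filter_upwards [hle] with s hs hmem
    exact hs ⟨by linarith [hmem.1, hmem.2], hmem.2⟩ hmem.1.ne'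
  · refine monotoneOn_primitive_div_abs_rpow (hfi x) ordConnected_Ioo (fun s hs => hs.2) ?_
    filter_upwards [hle] with s hs hmem
    exact hs ⟨hmem.1, by linarith [hmem.1, hmem.2]⟩ hmem.2.ne

theorem stmt11 {X : Type*} (f F : X → ℝ → ℝ)
    (hfi : ∀ x : X, ∀ a b : ℝ, IntervalIntegrable (f x) volume a b)
    (hF : ∀ (x : X) (s : ℝ), F x s = ∫ t in (0 : ℝ)..s, f x t)
    (ε₀ q : ℝ) (hε₀ : 0 < ε₀) (hq : q < 2)
    (hsub : ∀ x : X, ∀ᵐ s ∂(volume.restrict (Set.Ioo (-ε₀) ε₀)),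
      s ≠ 0 → 0 < f x s * s ∧ f x s * s ≤ q * F x s) :
    ∀ x : X,
      AntitoneOn (fun s => F x s / |s| ^ q) (Set.Ioo 0 ε₀) ∧
      MonotoneOn (fun s => F x s / |s| ^ q) (Set.Ioo (-ε₀) 0) :=
  stmt11_general f F hfi hF ε₀ q hsub
end

section
/- Let F : Ω × ℝ → ℝ, F(x,s) = ∫₀^s f(x,t) dt, and suppose there exist ε₀, κ₂ > 0 and q < 2 such that 0 < f(x,s)s ≤ qF(x,s) for a.e. s ∈ (-ε₀,ε₀)\{0}, and F(x,s) ≥ κ₂ for s ∈ {-ε₀, ε₀} and all x ∈ Ω. Then F(x,s) ≥ (κ₂/ε₀^q) |s|^q for all x ∈ Ω and all s with 0 < |s| < ε₀. -/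
open Real MeasureTheory Set

/-!
Writing `F(t) = ∫₀ᵗ f`, the function `t ↦ F(t) t^(-q)` is absolutely continuous on compact
subintervals of `(0, ε₀]`, with derivative `t^(-q-1) (f(t) t - q F(t)) ≤ 0` almost everywhere, so it
is nonincreasing there: `F(ε₀) ε₀^(-q) ≤ F(s) s^(-q)` for `0 < s < ε₀`, which is the claim for `s > 0`.
Negative `s` reduce to this by applying it to `t ↦ -f(-t)`, whose primitive is `t ↦ F(-t)`.
-/

theorem AbsolutelyContinuousOnInterval.mul_rpow_neg_le_of_deriv_mul_le {F : ℝ → ℝ} {a b q : ℝ}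
    (hF : AbsolutelyContinuousOnInterval F a b) (ha : 0 < a) (hab : a ≤ b)
    (hderiv : ∀ᵐ t, t ∈ Ioo a b → deriv F t * t ≤ q * F t) :
    F b * b ^ (-q) ≤ F a * a ^ (-q) := by
  have hg : AbsolutelyContinuousOnInterval (fun t ↦ t ^ (-q)) a b := by
    refine ContDiffOn.absolutelyContinuousOnInterval fun t ht ↦ ?_
    rw [uIcc_of_le hab] at ht
    exact (contDiffAt_rpow_const_of_ne (ha.trans_le ht.1).ne').contDiffWithinAt
  have hint := hF.integral_deriv_mul_eq_sub hg
  suffices 0 ≤ ∫ t in a..b, -(deriv F t * t ^ (-q) + F t * deriv (fun t ↦ t ^ (-q)) t) by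
    rw [intervalIntegral.integral_neg, hint] at this
    linarith
  refine intervalIntegral.integral_nonneg_of_ae_restrict hab ?_
  rw [← Measure.restrict_congr_set Ioo_ae_eq_Icc]
  filter_upwards [ae_restrict_mem measurableSet_Ioo, ae_restrict_of_ae hderiv] with t ht hFt
  have ht0 : t ≠ 0 := (ha.trans ht.1).ne'
  have hexpand : deriv F t * t ^ (-q) + F t * deriv (fun t ↦ t ^ (-q)) t
      = t ^ (-q - 1) * (deriv F t * t - q * F t) := by
    rw [Real.deriv_rpow_const, rpow_sub_one ht0]
    field_simp
    ring
  rw [Pi.zero_apply, hexpand, neg_nonneg]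
  exact mul_nonpos_of_nonneg_of_nonpos (rpow_nonneg (ha.trans ht.1).le _) (by linarith [hFt ht])

theorem integral_mul_rpow_neg_le_of_mul_le {f : ℝ → ℝ} {a b q : ℝ}
    (hf : IntervalIntegrable f volume 0 b) (ha : 0 < a) (hab : a ≤ b)
    (hsub : ∀ᵐ t, t ∈ Ioo a b → f t * t ≤ q * ∫ u in 0..t, f u) :
    (∫ u in 0..b, f u) * b ^ (-q) ≤ (∫ u in 0..a, f u) * a ^ (-q) := by
  have hb : 0 ≤ b := ha.le.trans hab
  have hsub_uIcc : uIcc a b ⊆ uIcc 0 b := by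
    rw [uIcc_of_le hab, uIcc_of_le hb]
    exact Icc_subset_Icc_left ha.le
  have hAC := (hf.absolutelyContinuousOnInterval_intervalIntegral left_mem_uIcc).mono hsub_uIcc
  refine hAC.mul_rpow_neg_le_of_deriv_mul_le ha hab ?_
  filter_upwards [hf.ae_hasDerivAt_integral, hsub] with t hderiv ht hmem
  have hmem' : t ∈ uIcc 0 b := by
    rw [uIcc_of_le hb]
    exact ⟨(ha.trans hmem.1).le, hmem.2.le⟩
  rw [(hderiv hmem' 0 left_mem_uIcc).deriv]
  exact ht hmem

theorem div_rpow_mul_rpow_le_integral_of_mul_le {f : ℝ → ℝ} {ε κ q s : ℝ}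
    (hf : IntervalIntegrable f volume 0 ε) (hs : 0 < s) (hsε : s ≤ ε)
    (hsub : ∀ᵐ t, t ∈ Ioo 0 ε → f t * t ≤ q * ∫ u in 0..t, f u)
    (hκ : κ ≤ ∫ u in 0..ε, f u) :
    κ / ε ^ q * s ^ q ≤ ∫ u in 0..s, f u := by
  have hε : 0 < ε := hs.trans_le hsε
  have hcompare := integral_mul_rpow_neg_le_of_mul_le hf hs hsε
    (hsub.mono fun t h ht ↦ h ⟨hs.trans ht.1, ht.2⟩)
  rw [rpow_neg hε.le, rpow_neg hs.le, ← div_eq_mul_inv, ← div_eq_mul_inv,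
    div_le_div_iff₀ (rpow_pos_of_pos hε q) (rpow_pos_of_pos hs q)] at hcompare
  rw [div_mul_eq_mul_div, div_le_iff₀ (rpow_pos_of_pos hε q)]
  nlinarith [rpow_nonneg hs.le q]

theorem integral_neg_comp_neg (f : ℝ → ℝ) (s : ℝ) :
    ∫ u in 0..s, -f (-u) = ∫ u in 0..-s, f u := by
  rw [intervalIntegral.integral_neg, intervalIntegral.integral_comp_neg, neg_zero,
    intervalIntegral.integral_symm, neg_neg]

theorem div_rpow_mul_abs_rpow_le_integral_of_mul_le {f : ℝ → ℝ} {ε κ q s : ℝ}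
    (hf : IntervalIntegrable f volume (-ε) ε)
    (hsub : ∀ᵐ t, t ∈ Ioo (-ε) ε → t ≠ 0 → f t * t ≤ q * ∫ u in 0..t, f u)
    (hκ : κ ≤ ∫ u in 0..ε, f u) (hκ' : κ ≤ ∫ u in 0..-ε, f u)
    (hs : 0 < |s|) (hsε : |s| ≤ ε) :
    κ / ε ^ q * |s| ^ q ≤ ∫ u in 0..s, f u := by
  wlog hpos : 0 < s generalizing f s
  · have hneg : s < 0 := lt_of_le_of_ne (not_lt.mp hpos) (abs_pos.mp hs)
    have hg : IntervalIntegrable (fun u ↦ -f (-u)) volume (-ε) ε := by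
      simpa only [neg_neg, Pi.neg_def] using ((IntervalIntegrable.iff_comp_neg).mp hf).neg.symm
    have hsub' : ∀ᵐ t, t ∈ Ioo (-ε) ε → t ≠ 0 →
        -f (-t) * t ≤ q * ∫ u in 0..t, -f (-u) := by
      filter_upwards [(Measure.measurePreserving_neg volume).quasiMeasurePreserving.ae hsub]
        with t ht hmem ht0
      rw [integral_neg_comp_neg]
      simpa using ht ⟨by linarith [hmem.2], by linarith [hmem.1]⟩ (neg_ne_zero.mpr ht0)
    have := this hg hsub' (by rwa [integral_neg_comp_neg])
      (by rwa [integral_neg_comp_neg, neg_neg]) (abs_neg s ▸ hs) (abs_neg s ▸ hsε)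
      (neg_pos.mpr hneg)
    rwa [integral_neg_comp_neg, neg_neg, abs_neg] at this
  rw [abs_of_pos hpos] at hsε ⊢
  have hε : 0 ≤ ε := hpos.le.trans hsε
  refine div_rpow_mul_rpow_le_integral_of_mul_le (hf.mono_set ?_) hpos hsε ?_ hκ
  · exact uIcc_subset_uIcc (by simp [hε]) right_mem_uIcc
  · filter_upwards [hsub] with t ht hmem
    exact ht ⟨by linarith [hmem.1], hmem.2⟩ hmem.1.ne'

theorem stmt12_general {X : Type*} (f F : X → ℝ → ℝ)
    (hfi : ∀ x : X, ∀ a b : ℝ, IntervalIntegrable (f x) volume a b)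
    (hF : ∀ (x : X) (s : ℝ), F x s = ∫ t in (0 : ℝ)..s, f x t)
    (ε₀ κ₂ q : ℝ)
    (hsub : ∀ x : X, ∀ᵐ s ∂(volume.restrict (Set.Ioo (-ε₀) ε₀)),
      s ≠ 0 → 0 < f x s * s ∧ f x s * s ≤ q * F x s)
    (hbd : ∀ x : X, F x ε₀ ≥ κ₂ ∧ F x (-ε₀) ≥ κ₂) :
    ∀ (x : X) (s : ℝ), 0 < |s| → |s| < ε₀ → F x s ≥ κ₂ / ε₀ ^ q * |s| ^ q := by
  intro x s hs hsε
  simp only [hF] at hsub hbd ⊢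
  refine div_rpow_mul_abs_rpow_le_integral_of_mul_le (hfi x _ _) ?_ (hbd x).1 (hbd x).2 hs hsε.le
  filter_upwards [(ae_restrict_iff' measurableSet_Ioo).mp (hsub x)] with t ht hmem ht0
  exact (ht hmem ht0).2

theorem stmt12 {X : Type*} (f F : X → ℝ → ℝ)
    (hfi : ∀ x : X, ∀ a b : ℝ, IntervalIntegrable (f x) volume a b)
    (hF : ∀ (x : X) (s : ℝ), F x s = ∫ t in (0 : ℝ)..s, f x t)
    (ε₀ κ₂ q : ℝ) (hε₀ : 0 < ε₀) (hκ₂ : 0 < κ₂) (hq : q < 2)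
    (hsub : ∀ x : X, ∀ᵐ s ∂(volume.restrict (Set.Ioo (-ε₀) ε₀)),
      s ≠ 0 → 0 < f x s * s ∧ f x s * s ≤ q * F x s)
    (hbd : ∀ x : X, F x ε₀ ≥ κ₂ ∧ F x (-ε₀) ≥ κ₂) :
    ∀ (x : X) (s : ℝ), 0 < |s| → |s| < ε₀ → F x s ≥ κ₂ / ε₀ ^ q * |s| ^ q :=
  stmt12_general f F hfi hF ε₀ κ₂ q hsub hbd
end

section
/- Let Ω ⊆ ℝ^N be open, C₀, C₁ > 0, 0 < r₀ < δ, q ∈ [1,2), and let D, d : [r₀, δ) → ℝ be continuous, differentiable on (r₀,δ), with d nondecreasing, d' ≥ 0, D(r₀) = d(r₀) = 0, and suppose D'(r) ≥ -C₀ D(r) - C₁ d(r) + ((2-q) - g(r)) d'(r) on (r₀, δ), where g : [r₀,δ) → [0,∞) is continuous with g(r₀) = 0. Then there exist r₁ ∈ (r₀, δ) and C₃ > 0 such that D(r) ≥ C₃ d(r) for all r ∈ (r₀, r₁). -/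
open Real Set Filter Topology

/-!
Put `c = (2 - q) / 2`. Since `g` is continuous with `g r₀ = 0`, near `r₀` the inequality gives
`D' ≥ -C₀ D - C₁ d + c d'`. On `[r₀, r]` the function
`φ s = e^{C₀ (s - r₀)} D s - c d s + C₁ e^{C₀ (r - r₀)} d r (s - r₀)` then has `φ' ≥ 0`: the
linear term absorbs `-C₁ e^{C₀ (s - r₀)} d s` because `d` is nonnegative and nondecreasing.
Hence `φ r ≥ φ r₀ = 0`, i.e. `e^{C₀ (r - r₀)} D r ≥ (c - C₁ (r - r₀) e^{C₀ (r - r₀)}) d r`,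
and once `r - r₀` is so small that the bracket is `≥ c / 2` and `e^{C₀ (r - r₀)} ≤ 2`,
this yields `D r ≥ (c / 4) d r`.
-/

lemma monotoneOn_Icc_of_hasDerivAt_nonneg {f f' : ℝ → ℝ} {a b : ℝ}
    (hf : ContinuousOn f (Icc a b)) (hf' : ∀ x ∈ Ioo a b, HasDerivAt f (f' x) x)
    (hf'₀ : ∀ x ∈ Ioo a b, 0 ≤ f' x) : MonotoneOn f (Icc a b) :=
  monotoneOn_of_hasDerivWithinAt_nonneg (convex_Icc a b) hf
    (by simpa only [interior_Icc] using fun x hx => (hf' x hx).hasDerivWithinAt)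
    (by simpa only [interior_Icc] using hf'₀)

lemma exists_Ioo_forall_of_eventually_nhdsGT {p : ℝ → Prop} {a b : ℝ} (hab : a < b)
    (hp : ∀ᶠ x in 𝓝[>] a, p x) : ∃ c ∈ Ioo a b, ∀ x ∈ Ioo a c, p x := by
  obtain ⟨u, hu, hu_sub⟩ := (mem_nhdsGT_iff_exists_mem_Ioc_Ioo_subset hab).1 hp
  obtain ⟨c, hac, hcu⟩ := exists_between hu.1
  exact ⟨c, ⟨hac, hcu.trans_le hu.2⟩, fun x hx => hu_sub ⟨hx.1, hx.2.trans hcu⟩⟩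

theorem gronwall_lower_bound {C₀ C₁ c a b : ℝ} {D d D' d' : ℝ → ℝ}
    (hC₀ : 0 ≤ C₀) (hC₁ : 0 ≤ C₁) (hc : 0 ≤ c) (hab : a ≤ b)
    (hD : ContinuousOn D (Icc a b)) (hd : ContinuousOn d (Icc a b))
    (hD' : ∀ s ∈ Ioo a b, HasDerivAt D (D' s) s) (hd' : ∀ s ∈ Ioo a b, HasDerivAt d (d' s) s)
    (hd'_nonneg : ∀ s ∈ Ioo a b, 0 ≤ d' s) (hda : 0 ≤ d a)
    (hineq : ∀ s ∈ Ioo a b, -C₀ * D s - C₁ * d s + c * d' s ≤ D' s) :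
    D a - c * d a ≤
      exp (C₀ * (b - a)) * D b - (c - C₁ * (b - a) * exp (C₀ * (b - a))) * d b := by
  have hd_mono := monotoneOn_Icc_of_hasDerivAt_nonneg hd hd' hd'_nonneg
  set K := C₁ * exp (C₀ * (b - a)) * d b with hK
  let φ s := exp (C₀ * (s - a)) * D s - c * d s + K * (s - a)
  have hφ' : ∀ s ∈ Ioo a b, HasDerivAt φ
      (exp (C₀ * (s - a)) * (C₀ * D s + D' s) - c * d' s + K) s := by
    intro s hs
    have hexp : HasDerivAt (fun s => exp (C₀ * (s - a))) (exp (C₀ * (s - a)) * C₀) s := by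
      simpa using (((hasDerivAt_id s).sub_const a).const_mul C₀).exp
    exact (((hexp.mul (hD' s hs)).sub ((hd' s hs).const_mul c)).add
      (((hasDerivAt_id s).sub_const a).const_mul K)).congr_deriv (by ring)
  have hφ'_nonneg : ∀ s ∈ Ioo a b,
      0 ≤ exp (C₀ * (s - a)) * (C₀ * D s + D' s) - c * d' s + K := by
    intro s hs
    have hs' : s ∈ Icc a b := Ioo_subset_Icc_self hs
    have hE₁ : 1 ≤ exp (C₀ * (s - a)) := one_le_exp (by nlinarith [hs.1])
    have hEb : exp (C₀ * (s - a)) ≤ exp (C₀ * (b - a)) := exp_le_exp.2 (by nlinarith [hs.2])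
    have hds : 0 ≤ d s := hda.trans (hd_mono (left_mem_Icc.2 hab) hs' hs.1.le)
    have hdb : d s ≤ d b := hd_mono hs' (right_mem_Icc.2 hab) hs.2.le
    have h₁ : exp (C₀ * (s - a)) * (-C₁ * d s + c * d' s) ≤
        exp (C₀ * (s - a)) * (C₀ * D s + D' s) :=
      mul_le_mul_of_nonneg_left (by linarith [hineq s hs]) (exp_pos _).le
    have h₂ : 0 ≤ c * d' s * (exp (C₀ * (s - a)) - 1) :=
      mul_nonneg (mul_nonneg hc (hd'_nonneg s hs)) (sub_nonneg.2 hE₁)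
    have h₃ : C₁ * (exp (C₀ * (s - a)) * d s) ≤ K := by
      rw [hK, mul_assoc]
      exact mul_le_mul_of_nonneg_left (mul_le_mul hEb hdb hds (exp_pos _).le) hC₁
    linarith
  have hφ_mono := monotoneOn_Icc_of_hasDerivAt_nonneg (by fun_prop) hφ' hφ'_nonneg
  have hφ_ab : φ a ≤ φ b := hφ_mono (left_mem_Icc.2 hab) (right_mem_Icc.2 hab) hab
  simp only [φ, K, sub_self, mul_zero, exp_zero, one_mul, add_zero] at hφ_ab
  linarith

theorem gronwall_lower_bound_of_short_interval {C₀ C₁ c a b : ℝ} {D d D' d' : ℝ → ℝ}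
    (hC₀ : 0 ≤ C₀) (hC₁ : 0 ≤ C₁) (hc : 0 ≤ c) (hab : a ≤ b)
    (hD : ContinuousOn D (Icc a b)) (hd : ContinuousOn d (Icc a b))
    (hD' : ∀ s ∈ Ioo a b, HasDerivAt D (D' s) s) (hd' : ∀ s ∈ Ioo a b, HasDerivAt d (d' s) s)
    (hd'_nonneg : ∀ s ∈ Ioo a b, 0 ≤ d' s) (hDa : D a = 0) (hda : d a = 0)
    (hineq : ∀ s ∈ Ioo a b, -C₀ * D s - C₁ * d s + c * d' s ≤ D' s)
    (hshort : C₁ * (b - a) * exp (C₀ * (b - a)) ≤ c / 2) (hexp : exp (C₀ * (b - a)) ≤ 2) :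
    c / 4 * d b ≤ D b := by
  have hbound := gronwall_lower_bound hC₀ hC₁ hc hab hD hd hD' hd' hd'_nonneg hda.ge hineq
  rw [hDa, hda] at hbound
  have hdb : 0 ≤ d b := hda ▸ monotoneOn_Icc_of_hasDerivAt_nonneg hd hd' hd'_nonneg
    (left_mem_Icc.2 hab) (right_mem_Icc.2 hab) hab
  have hc_db : c / 2 * d b ≤ exp (C₀ * (b - a)) * D b := by
    nlinarith [mul_le_mul_of_nonneg_right hshort hdb]
  have hDb : 0 ≤ D b :=
    nonneg_of_mul_nonneg_right ((by positivity : 0 ≤ c / 2 * d b).trans hc_db) (exp_pos _)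
  nlinarith [mul_le_mul_of_nonneg_right hexp hDb]

theorem stmt17_general (C₀ C₁ q r₀ δ : ℝ) (hC₀ : 0 < C₀) (hC₁ : 0 < C₁)
    (hq2 : q < 2) (hδ : r₀ < δ)
    (D d D' d' g : ℝ → ℝ)
    (hDcont : ContinuousOn D (Set.Ico r₀ δ)) (hdcont : ContinuousOn d (Set.Ico r₀ δ))
    (hDder : ∀ r ∈ Set.Ioo r₀ δ, HasDerivAt D (D' r) r)
    (hdder : ∀ r ∈ Set.Ioo r₀ δ, HasDerivAt d (d' r) r)
    (hd'nonneg : ∀ r ∈ Set.Ioo r₀ δ, 0 ≤ d' r)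
    (hD₀ : D r₀ = 0) (hd₀ : d r₀ = 0)
    (hgcont : ContinuousOn g (Set.Ico r₀ δ))
    (hg₀ : g r₀ = 0)
    (hineq : ∀ r ∈ Set.Ioo r₀ δ, D' r ≥ -C₀ * D r - C₁ * d r + ((2 - q) - g r) * d' r) :
    ∃ r₁ ∈ Set.Ioo r₀ δ, ∃ C₃ > 0, ∀ r ∈ Set.Ioo r₀ r₁, D r ≥ C₃ * d r := by
  set c := (2 - q) / 2 with hc_def
  have hc : 0 < c := by linarith
  have hg_small : ∀ᶠ r in 𝓝[>] r₀, g r < c := by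
    have hg : Tendsto g (𝓝[>] r₀) (𝓝 (g r₀)) :=
      (hgcont r₀ ⟨le_rfl, hδ⟩).mono_of_mem_nhdsWithin (Ico_mem_nhdsGT hδ)
    exact (hg₀ ▸ hg).eventually_lt_const hc
  have h_short : ∀ᶠ r in 𝓝[>] r₀,
      C₁ * (r - r₀) * exp (C₀ * (r - r₀)) < c / 2 ∧ exp (C₀ * (r - r₀)) < 2 := by
    have h₁ : Tendsto (fun r => C₁ * (r - r₀) * exp (C₀ * (r - r₀))) (𝓝[>] r₀) (𝓝 0) :=
      ((by fun_prop : Continuous _).tendsto' r₀ 0 (by simp)).mono_left nhdsWithin_le_nhds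
    have h₂ : Tendsto (fun r => exp (C₀ * (r - r₀))) (𝓝[>] r₀) (𝓝 1) :=
      ((by fun_prop : Continuous _).tendsto' r₀ 1 (by simp)).mono_left nhdsWithin_le_nhds
    exact (h₁.eventually_lt_const (by positivity)).and (h₂.eventually_lt_const one_lt_two)
  obtain ⟨r₁, hr₁, hr₁_small⟩ :=
    exists_Ioo_forall_of_eventually_nhdsGT hδ (hg_small.and h_short)
  refine ⟨r₁, hr₁, c / 4, by positivity, fun r hr => ?_⟩
  have hIcc : Icc r₀ r ⊆ Ico r₀ δ := fun s hs => ⟨hs.1, hs.2.trans_lt (hr.2.trans hr₁.2)⟩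
  have hIoo : Ioo r₀ r ⊆ Ioo r₀ δ := fun s hs => ⟨hs.1, hs.2.trans (hr.2.trans hr₁.2)⟩
  refine gronwall_lower_bound_of_short_interval hC₀.le hC₁.le hc.le hr.1.le (hDcont.mono hIcc)
    (hdcont.mono hIcc) (fun s hs => hDder s (hIoo hs)) (fun s hs => hdder s (hIoo hs))
    (fun s hs => hd'nonneg s (hIoo hs)) hD₀ hd₀ (fun s hs => ?_) (hr₁_small r hr).2.1.le
    (hr₁_small r hr).2.2.le
  have hgs : g s ≤ c := (hr₁_small s ⟨hs.1, hs.2.trans hr.2⟩).1.le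
  have hcd' : c * d' s ≤ ((2 - q) - g s) * d' s :=
    mul_le_mul_of_nonneg_right (by linarith) (hd'nonneg s (hIoo hs))
  linarith [hineq s (hIoo hs)]

theorem stmt17 (C₀ C₁ q r₀ δ : ℝ) (hC₀ : 0 < C₀) (hC₁ : 0 < C₁)
    (hq1 : 1 ≤ q) (hq2 : q < 2) (hr₀ : 0 < r₀) (hδ : r₀ < δ)
    (D d D' d' g : ℝ → ℝ)
    (hDcont : ContinuousOn D (Set.Ico r₀ δ)) (hdcont : ContinuousOn d (Set.Ico r₀ δ))
    (hDder : ∀ r ∈ Set.Ioo r₀ δ, HasDerivAt D (D' r) r)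
    (hdder : ∀ r ∈ Set.Ioo r₀ δ, HasDerivAt d (d' r) r)
    (hdmono : MonotoneOn d (Set.Ico r₀ δ))
    (hd'nonneg : ∀ r ∈ Set.Ioo r₀ δ, 0 ≤ d' r)
    (hD₀ : D r₀ = 0) (hd₀ : d r₀ = 0)
    (hgcont : ContinuousOn g (Set.Ico r₀ δ)) (hgnonneg : ∀ r ∈ Set.Ico r₀ δ, 0 ≤ g r)
    (hg₀ : g r₀ = 0)
    (hineq : ∀ r ∈ Set.Ioo r₀ δ, D' r ≥ -C₀ * D r - C₁ * d r + ((2 - q) - g r) * d' r) :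
    ∃ r₁ ∈ Set.Ioo r₀ δ, ∃ C₃ > 0, ∀ r ∈ Set.Ioo r₀ r₁, D r ≥ C₃ * d r :=
  stmt17_general C₀ C₁ q r₀ δ hC₀ hC₁ hq2 hδ D d D' d' g hDcont hdcont hDder hdder hd'nonneg hD₀ hd₀
    hgcont hg₀ hineq
end
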